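/- Expansion inequality: there is a constant c > 0 such that for all ℓ ≥ 0, all r ∈ [0,1], and all nonzero w ∈ r (the 5-dimensional complement of so(Q₀) in sl₃(ℝ)), ‖Ad(a_ℓ u_r) w‖ ≥ c · e^ℓ · ‖(Ad(u_r) w)⁺‖, where X⁺ denotes the orthogonal projection of X onto the span of the positive a_t-weight vectors in r. -/

import Mathlib

open Matrix

def Jmat : Matrix (Fin 3) (Fin 3) ℝ := !![0, 0, -1; 0, 1, 0; -1, 0, 0]

noncomputable def aMat (t : ℝ) : Matrix (Fin 3) (Fin 3) ℝ :=
  !![Real.exp t, 0, 0; 0, 1, 0; 0, 0, Real.exp (-t)]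

noncomputable def uMat (r : ℝ) : Matrix (Fin 3) (Fin 3) ℝ :=
  !![1, r, r ^ 2 / 2; 0, 1, r; 0, 0, 1]

/-- The adjoint action Ad(g)X = gXg⁻¹. -/
noncomputable def Adj (g X : Matrix (Fin 3) (Fin 3) ℝ) : Matrix (Fin 3) (Fin 3) ℝ :=
  g * X * g⁻¹

/-- Membership in r = orthogonal complement of h = so(Q₀) inside sl₃(ℝ),
w.r.t. the trace form ⟨X,Y⟩ = tr(XYᵀ). -/
def memR (w : Matrix (Fin 3) (Fin 3) ℝ) : Prop :=
  Matrix.trace w = 0 ∧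
  ∀ X : Matrix (Fin 3) (Fin 3) ℝ,
    Matrix.trace X = 0 → Xᵀ * Jmat + Jmat * X = 0 → Matrix.trace (X * wᵀ) = 0

/-- Basis of r⁺ = Lie(V): weight e^t direction. -/
def Emat : Matrix (Fin 3) (Fin 3) ℝ := !![0, -1, 0; 0, 0, 1; 0, 0, 0]

/-- Basis of r⁺ = Lie(V): weight e^{2t} direction (center of W). -/
def Fmat : Matrix (Fin 3) (Fin 3) ℝ := !![0, 0, 1; 0, 0, 0; 0, 0, 0]

/-- Orthogonal projection onto r⁺ (w.r.t. the trace form). -/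
noncomputable def plusPart (X : Matrix (Fin 3) (Fin 3) ℝ) : Matrix (Fin 3) (Fin 3) ℝ :=
  ((X 1 2 - X 0 1) / 2) • Emat + X 0 2 • Fmat

/-- Frobenius norm, induced by ⟨X,Y⟩ = tr(XYᵀ). -/
noncomputable def frob (X : Matrix (Fin 3) (Fin 3) ℝ) : ℝ :=
  Real.sqrt (Matrix.trace (X * Xᵀ))

/-
`a_ℓ` is diagonal, so `Ad(a_ℓ)` multiplies the `(i, j)` entry by `e^{ℓ(λᵢ - λⱼ)}`, with
`λ = (1, 0, -1)`. The projection `X⁺` only sees the entries `(0,1)`, `(1,2)` and `(0,2)`, which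
are stretched by `e^ℓ`, `e^ℓ` and `e^{2ℓ} ≥ e^ℓ`; since `(b - a)² / 2 ≤ a² + b²` and the remaining
entries only add to the Frobenius norm, `‖Ad(a_ℓ) X‖ ≥ e^ℓ ‖X⁺‖`. Apply this to `X = Ad(u_r) w`,
using `Ad(a_ℓ u_r) = Ad(a_ℓ) ∘ Ad(u_r)`.
-/

lemma trace_mul_transpose_self {n : Type*} [Fintype n] (X : Matrix n n ℝ) :
    trace (X * Xᵀ) = ∑ i, ∑ j, X i j ^ 2 := by
  simp only [trace, diag, mul_apply, transpose_apply, sq]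

lemma Adj_mul (g h X : Matrix (Fin 3) (Fin 3) ℝ) : Adj (g * h) X = Adj g (Adj h X) := by
  simp only [Adj, Matrix.mul_inv_rev, Matrix.mul_assoc]

lemma aMat_eq_diagonal (t : ℝ) : aMat t = diagonal ![Real.exp t, 1, Real.exp (-t)] := by
  ext i j
  fin_cases i <;> fin_cases j <;> simp [aMat]

lemma aMat_inv (t : ℝ) : (aMat t)⁻¹ = aMat (-t) := by
  refine Matrix.inv_eq_right_inv ?_
  rw [aMat_eq_diagonal, aMat_eq_diagonal, diagonal_mul_diagonal, ← diagonal_one]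
  congr 1
  ext i
  fin_cases i <;> simp [← Real.exp_add]

lemma Adj_aMat_apply (t : ℝ) (Y : Matrix (Fin 3) (Fin 3) ℝ) (i j : Fin 3) :
    Adj (aMat t) Y i j =
      ![Real.exp t, 1, Real.exp (-t)] i * Y i j * ![Real.exp (-t), 1, Real.exp t] j := by
  rw [Adj, aMat_inv, aMat_eq_diagonal, aMat_eq_diagonal, neg_neg, mul_diagonal, diagonal_mul]

lemma trace_plusPart_mul_transpose (Y : Matrix (Fin 3) (Fin 3) ℝ) :
    trace (plusPart Y * (plusPart Y)ᵀ) = (Y 1 2 - Y 0 1) ^ 2 / 2 + Y 0 2 ^ 2 := by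
  rw [trace_mul_transpose_self]
  simp only [plusPart, Emat, Fmat, smul_of, smul_cons, smul_eq_mul, mul_zero, mul_neg, mul_one,
    smul_empty, Matrix.add_apply, of_apply, cons_val', cons_val_fin_one, Fin.sum_univ_three,
    cons_val_zero, cons_val_one, cons_val]
  ring

lemma exp_mul_frob_plusPart_le_frob_Adj_aMat {ℓ : ℝ} (hℓ : 0 ≤ ℓ)
    (Y : Matrix (Fin 3) (Fin 3) ℝ) :
    Real.exp ℓ * frob (plusPart Y) ≤ frob (Adj (aMat ℓ) Y) := by
  set E := Real.exp ℓ
  have hE : 1 ≤ E := Real.one_le_exp hℓ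
  rw [frob, frob, ← Real.sqrt_sq (zero_le_one.trans hE), ← Real.sqrt_mul (sq_nonneg E)]
  refine Real.sqrt_le_sqrt ?_
  rw [trace_plusPart_mul_transpose, trace_mul_transpose_self]
  simp only [Fin.sum_univ_three, Adj_aMat_apply, cons_val_zero, cons_val_one, cons_val, mul_one,
    one_mul]
  have hE2 : E ^ 2 ≤ E ^ 4 := pow_le_pow_right₀ hE (by norm_num)
  nlinarith [sq_nonneg (Y 0 1 + Y 1 2), sq_nonneg (Y 0 2), sq_nonneg E,
    mul_le_mul_of_nonneg_right hE2 (sq_nonneg (Y 0 2))]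

/-- Expansion inequality: ‖Ad(a_ℓ u_r) w‖ ≥ c e^ℓ ‖(Ad(u_r) w)⁺‖. -/
theorem expansion_inequality :
    ∃ c : ℝ, c > 0 ∧ ∀ ℓ r : ℝ, 0 ≤ ℓ → r ∈ Set.Icc (0 : ℝ) 1 →
      ∀ w : Matrix (Fin 3) (Fin 3) ℝ, memR w → w ≠ 0 →
        frob (Adj (aMat ℓ * uMat r) w) ≥ c * Real.exp ℓ * frob (plusPart (Adj (uMat r) w)) := by
  refine ⟨1, one_pos, fun ℓ r hℓ _ w _ _ => ?_⟩
  rw [one_mul, Adj_mul]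
  exact exp_mul_frob_plusPart_le_frob_Adj_aMat hℓ _
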